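/- Let ≺ be the total order on the positive roots Φ⁺ of a finite root system induced by a reduced expression of the longest element w_0 (β_1 ≺ β_2 ≺ ... ≺ β_N where β_k = s_{i_1}···s_{i_{k−1}}(α_{i_k})). Then ≺ is convex: whenever γ, γ', γ'' ∈ Φ⁺ satisfy γ' = γ + γ'', either γ ≺ γ' ≺ γ'' or γ'' ≺ γ' ≺ γ. -/

import Mathlib

namespace Stmt11

/- Framework: Weyl groups of simply-laced type acting on the root lattice via a Cartan matrix.
A root `β = Σ cᵢ αᵢ` is recorded by its coefficient vector `c : Fin n → ℤ` on the simple
roots.  The simple reflection `sᵢ` acts by `sᵢ(v) = v - (Σⱼ A i j * v j) • eᵢ`, which is the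
action of the Weyl group on the root lattice.  This representation is faithful, so the
Coxeter length of an element of the Weyl group is the minimal length of a word of simple
reflections representing the corresponding transformation (`wlen`). -/

/-- The simple reflection `sᵢ` acting on root-lattice coordinates. -/
def sR {n : ℕ} (A : Matrix (Fin n) (Fin n) ℤ) (i : Fin n) (v : Fin n → ℤ) : Fin n → ℤ :=
  fun k => v k - (if k = i then ∑ j, A i j * v j else 0)

/-- The action of the product `s_{i₁} ⋯ s_{iₘ}` of simple reflections on the root lattice. -/
def applyWord {n : ℕ} (A : Matrix (Fin n) (Fin n) ℤ) : List (Fin n) → (Fin n → ℤ) → (Fin n → ℤ)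
  | [] => id
  | i :: l => sR A i ∘ applyWord A l

/-- `v` is (the coefficient vector of) a root: an element of the Weyl-group orbit of a
simple root. -/
def IsRoot {n : ℕ} (A : Matrix (Fin n) (Fin n) ℤ) (v : Fin n → ℤ) : Prop :=
  ∃ (l : List (Fin n)) (i : Fin n), v = applyWord A l (Pi.single i 1)

/-- `v` is a positive root: a root with nonnegative coefficients. -/
def IsPosRoot {n : ℕ} (A : Matrix (Fin n) (Fin n) ℤ) (v : Fin n → ℤ) : Prop :=
  IsRoot A v ∧ ∀ i, 0 ≤ v i

/-- The Coxeter length of an element of the Weyl group, realized as the minimal length of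
a word in the simple reflections representing the given transformation of the root
lattice. -/
noncomputable def wlen {n : ℕ} (A : Matrix (Fin n) (Fin n) ℤ)
    (f : (Fin n → ℤ) → (Fin n → ℤ)) : ℕ :=
  sInf {k | ∃ l : List (Fin n), l.length = k ∧ applyWord A l = f}


/-!
Humphreys' argument shows that `0 ≤ l(αᵢ)` whenever `l ++ [i]` is reduced: by induction on
the length of `l`, with `sⱼ` its last letter, split off a left factor `u` of minimal length
such that the rest of `l` lies in the parabolic subgroup `⟨sᵢ, sⱼ⟩`. Then `u` has ascents at `i` and `j`, and the rest is an
alternating word of length less than the order `mᵢⱼ` of `sᵢsⱼ`; finiteness of the root system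
forces `aᵢⱼaⱼᵢ ≤ 3`, so this is an explicit rank-two computation. Hence every root is positive
or negative, `sᵢ` permutes `Φ⁺ \ {αᵢ}`, a word has at most as many inversions as letters, and
`ω`, which inverts all of `Φ⁺`, is reduced.

For reduced `ω` with prefixes `w_p`, the root `w_p⁻¹ β_q` is positive for `p ≤ q` and
negative for `p > q`. If `β_{k₂} = β_{k₁} + β_{k₃}` and `k₂` were smaller (larger) than both
`k₁` and `k₃`, applying `w_{k₂+1}⁻¹` (`w_{k₂}⁻¹`) would give `-α_{i_{k₂}}` (`α_{i_{k₂}}`) on the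
left and a nonnegative (nonpositive) vector on the right.
-/

open Matrix
open CoxeterSystem (alternatingWord alternatingWord_succ)

variable {n : ℕ}

section LinearAlgebra

variable (A : Matrix (Fin n) (Fin n) ℤ)

def reflectionMatrix (i : Fin n) : Matrix (Fin n) (Fin n) ℤ :=
  1 - vecMulVec (Pi.single i 1) (A i)

def wordMatrix (l : List (Fin n)) : Matrix (Fin n) (Fin n) ℤ :=
  (l.map (reflectionMatrix A)).prod

lemma sR_eq_sub (i : Fin n) (v : Fin n → ℤ) : sR A i v = v - (A *ᵥ v) i • Pi.single i 1 := by
  ext k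
  by_cases h : k = i <;> simp [sR, h, mulVec, dotProduct]

lemma sR_eq_mulVec (i : Fin n) (v : Fin n → ℤ) : sR A i v = reflectionMatrix A i *ᵥ v := by
  ext k
  by_cases h : k = i <;> simp [sR, reflectionMatrix, sub_mulVec, vecMulVec_mulVec, h, dotProduct]

lemma applyWord_eq_mulVec (l : List (Fin n)) (v : Fin n → ℤ) :
    applyWord A l v = wordMatrix A l *ᵥ v := by
  induction l with
  | nil => simp [applyWord, wordMatrix]
  | cons i l ih => simp [applyWord, wordMatrix, ih, sR_eq_mulVec, mulVec_mulVec]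

lemma applyWord_add (l : List (Fin n)) (v w : Fin n → ℤ) :
    applyWord A l (v + w) = applyWord A l v + applyWord A l w := by
  simp [applyWord_eq_mulVec, mulVec_add]

lemma applyWord_smul (l : List (Fin n)) (c : ℤ) (v : Fin n → ℤ) :
    applyWord A l (c • v) = c • applyWord A l v := by
  rw [applyWord_eq_mulVec, applyWord_eq_mulVec, mulVec_smul]

lemma applyWord_neg (l : List (Fin n)) (v : Fin n → ℤ) :
    applyWord A l (-v) = -applyWord A l v := by
  simp [applyWord_eq_mulVec, mulVec_neg]

lemma applyWord_append (l₁ l₂ : List (Fin n)) :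
    applyWord A (l₁ ++ l₂) = applyWord A l₁ ∘ applyWord A l₂ := by
  induction l₁ with
  | nil => rfl
  | cons i l ih => simp [applyWord, ih, Function.comp_assoc]

end LinearAlgebra

section Involutions

variable {A : Matrix (Fin n) (Fin n) ℤ} (hdiag : ∀ i, A i i = 2)
include hdiag

lemma det_reflectionMatrix (i : Fin n) : (reflectionMatrix A i).det = -1 := by
  rw [reflectionMatrix, vecMulVec_eq Unit, det_one_sub_mul_comm]
  simp [hdiag]

lemma det_wordMatrix (l : List (Fin n)) : (wordMatrix A l).det = (-1) ^ l.length := by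
  induction l with
  | nil => simp [wordMatrix]
  | cons i l ih =>
    simp only [wordMatrix] at ih
    simp [wordMatrix, det_reflectionMatrix hdiag, ih, pow_succ]

lemma length_mod_two_eq_of_applyWord_eq {l l' : List (Fin n)}
    (h : applyWord A l = applyWord A l') : l.length % 2 = l'.length % 2 := by
  have hM : wordMatrix A l = wordMatrix A l' :=
    mulVec_injective (funext fun v => by rw [← applyWord_eq_mulVec, ← applyWord_eq_mulVec, h])
  have := congrArg det hM
  rw [det_wordMatrix hdiag, det_wordMatrix hdiag] at this
  rcases Nat.even_or_odd l.length with h₁ | h₁ <;> rcases Nat.even_or_odd l'.length with h₂ | h₂ <;>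
    simp_all [Odd.neg_one_pow, Nat.even_iff, Nat.odd_iff]

lemma sR_single (i : Fin n) : sR A i (Pi.single i 1) = -Pi.single i 1 := by
  rw [sR_eq_sub, mulVec_single_one]
  simp [hdiag]
  ring

lemma sR_sR (i : Fin n) (v : Fin n → ℤ) : sR A i (sR A i v) = v := by
  rw [sR_eq_sub A i v, sR_eq_sub, mulVec_sub, mulVec_smul, mulVec_single_one]
  simp [hdiag]
  ring

lemma applyWord_reverse_apply (l : List (Fin n)) (v : Fin n → ℤ) :
    applyWord A l.reverse (applyWord A l v) = v := by
  induction l generalizing v with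
  | nil => rfl
  | cons i l ih =>
    rw [List.reverse_cons, applyWord_append]
    simp [applyWord, sR_sR hdiag, ih]

lemma applyWord_append_pair (l : List (Fin n)) (x : Fin n) :
    applyWord A (l ++ [x, x]) = applyWord A l := by
  funext v
  simp [applyWord_append, applyWord, sR_sR hdiag]

end Involutions

section ReducedWords

variable (A : Matrix (Fin n) (Fin n) ℤ)

def IsReduced (l : List (Fin n)) : Prop := wlen A (applyWord A l) = l.length

lemma wlen_le_length (l : List (Fin n)) : wlen A (applyWord A l) ≤ l.length :=
  Nat.sInf_le ⟨l, rfl, rfl⟩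

lemma exists_isReduced (l : List (Fin n)) :
    ∃ r, applyWord A r = applyWord A l ∧ IsReduced A r := by
  obtain ⟨r, hr, hval⟩ := Nat.sInf_mem (⟨_, l, rfl, rfl⟩ :
    {k | ∃ r : List (Fin n), r.length = k ∧ applyWord A r = applyWord A l}.Nonempty)
  exact ⟨r, hval, by rw [IsReduced, hval]; exact hr.symm⟩

variable {A}

lemma IsReduced.length_le {r l : List (Fin n)} (hr : IsReduced A r)
    (h : applyWord A r = applyWord A l) : r.length ≤ l.length := by
  rw [← hr, h]
  exact wlen_le_length A l

lemma IsReduced.of_length_le {r l : List (Fin n)} (hr : IsReduced A r)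
    (h : applyWord A l = applyWord A r) (hl : l.length ≤ r.length) : IsReduced A l :=
  le_antisymm (wlen_le_length A l) (by rw [h, hr]; exact hl)

lemma IsReduced.of_append {l₁ l₂ : List (Fin n)} (h : IsReduced A (l₁ ++ l₂)) :
    IsReduced A l₁ ∧ IsReduced A l₂ := by
  obtain ⟨r₁, hv₁, hr₁⟩ := exists_isReduced A l₁
  obtain ⟨r₂, hv₂, hr₂⟩ := exists_isReduced A l₂
  have hle := h.length_le (l := r₁ ++ r₂) (by rw [applyWord_append, applyWord_append, hv₁, hv₂])
  have h₁ := hr₁.length_le hv₁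
  have h₂ := hr₂.length_le hv₂
  simp only [List.length_append] at hle
  exact ⟨hr₁.of_length_le hv₁.symm (by omega), hr₂.of_length_le hv₂.symm (by omega)⟩

lemma IsReduced.take {l : List (Fin n)} (h : IsReduced A l) (p : ℕ) : IsReduced A (l.take p) := by
  rw [← List.take_append_drop p l] at h
  exact h.of_append.1

lemma IsReduced.reverse (hdiag : ∀ i, A i i = 2) {l : List (Fin n)} (h : IsReduced A l) :
    IsReduced A l.reverse := by
  obtain ⟨r, hv, hr⟩ := exists_isReduced A l.reverse
  have hinv : applyWord A r.reverse = applyWord A l := funext fun v => by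
    have hcancel : applyWord A r (applyWord A l v) = v := by
      rw [hv, applyWord_reverse_apply hdiag]
    conv_lhs => rw [← hcancel]
    exact applyWord_reverse_apply hdiag r _
  have := h.length_le hinv.symm
  exact hr.of_length_le hv.symm (by simpa using this)

lemma not_isReduced_append_pair (hdiag : ∀ i, A i i = 2) (l : List (Fin n)) (x : Fin n) :
    ¬ IsReduced A (l ++ [x, x]) := fun h => by
  have := h.length_le (applyWord_append_pair hdiag l x)
  simp at this

/-- Parity of lengths rules out `ℓ(l sₓ) = ℓ(l)`. -/
lemma IsReduced.exists_of_not_isReduced_append (hdiag : ∀ i, A i i = 2) {l : List (Fin n)}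
    {x : Fin n} (hl : IsReduced A l) (hlx : ¬ IsReduced A (l ++ [x])) :
    ∃ r, IsReduced A (r ++ [x]) ∧ applyWord A (r ++ [x]) = applyWord A l ∧
      r.length + 1 = l.length := by
  obtain ⟨r, hv, hr⟩ := exists_isReduced A (l ++ [x])
  have hrx : applyWord A (r ++ [x]) = applyWord A l := by
    rw [applyWord_append, hv, ← applyWord_append, List.append_assoc]
    exact applyWord_append_pair hdiag l x
  have hparity := length_mod_two_eq_of_applyWord_eq hdiag hv
  have h₁ := hr.length_le hv
  have h₂ := hl.length_le hrx.symm
  have h₃ : r.length ≠ (l ++ [x]).length := fun h => hlx (hr.of_length_le hv.symm h.ge)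
  simp only [List.length_append, List.length_singleton] at *
  exact ⟨r, hl.of_length_le hrx (by simp; omega), hrx, by omega⟩

end ReducedWords

structure IsFiniteCartan (A : Matrix (Fin n) (Fin n) ℤ) : Prop where
  diag : ∀ i, A i i = 2
  nonpos : ∀ i j, i ≠ j → A i j ≤ 0
  eq_zero_comm : ∀ i j, A i j = 0 → A j i = 0
  finite : {v | IsRoot A v}.Finite

lemma isRoot_applyWord {A : Matrix (Fin n) (Fin n) ℤ} {v : Fin n → ℤ} (hv : IsRoot A v)
    (l : List (Fin n)) : IsRoot A (applyWord A l v) := by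
  obtain ⟨l', k, rfl⟩ := hv
  exact ⟨l ++ l', k, by rw [applyWord_append]; rfl⟩

/-- The rank-two Cartan matrices `(0, 0)`, `(-1, -1)`, `(-1, -2)`, `(-1, -3)` (types `A₁ × A₁`,
`A₂`, `B₂`, `G₂`) and their transposes. -/
def IsFiniteTypePair (a b : ℤ) : Prop :=
  (a = 0 ∧ b = 0) ∨ (a = -1 ∧ b = -1) ∨ (a = -1 ∧ b = -2) ∨ (a = -2 ∧ b = -1) ∨
    (a = -1 ∧ b = -3) ∨ (a = -3 ∧ b = -1)

/-- The order `mᵢⱼ` of `sᵢsⱼ` for `(a, b) = (aᵢⱼ, aⱼᵢ)` of finite type. -/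
def braidLength (a b : ℤ) : ℕ :=
  if a * b = 0 then 2 else if a * b = 1 then 3 else if a * b = 2 then 4 else 6

lemma IsFiniteTypePair.symm {a b : ℤ} (h : IsFiniteTypePair a b) : IsFiniteTypePair b a := by
  unfold IsFiniteTypePair at *
  omega

lemma braidLength_comm (a b : ℤ) : braidLength a b = braidLength b a := by
  simp [braidLength, mul_comm]

lemma braidLength_pos (a b : ℤ) : 0 < braidLength a b := by
  unfold braidLength
  split_ifs <;> norm_num

section RankTwo

variable {A : Matrix (Fin n) (Fin n) ℤ} {i j : Fin n}

lemma sR_left_pair (hii : A i i = 2) (v : Fin n → ℤ) (x y : ℤ) :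
    sR A i (v + x • Pi.single i 1 + y • Pi.single j 1) =
      v + (-(A *ᵥ v) i - x - A i j * y) • Pi.single i 1 + y • Pi.single j 1 := by
  rw [sR_eq_sub]
  simp only [mulVec_add, mulVec_smul, mulVec_single_one, Pi.add_apply, Pi.smul_apply,
    col_apply, hii, smul_eq_mul]
  module

lemma sR_right_pair (hjj : A j j = 2) (v : Fin n → ℤ) (x y : ℤ) :
    sR A j (v + x • Pi.single i 1 + y • Pi.single j 1) =
      v + x • Pi.single i 1 + (-(A *ᵥ v) j - A j i * x - y) • Pi.single j 1 := by
  rw [sR_eq_sub]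
  simp only [mulVec_add, mulVec_smul, mulVec_single_one, Pi.add_apply, Pi.smul_apply,
    col_apply, hjj, smul_eq_mul]
  module

/-- In the coordinates `v + x • αᵢ + y • αⱼ`, both sides reduce to the same normal form. -/
theorem applyWord_braid (hdiag : ∀ i, A i i = 2) (hpair : IsFiniteTypePair (A i j) (A j i)) :
    applyWord A (alternatingWord i j (braidLength (A i j) (A j i))) =
      applyWord A (alternatingWord j i (braidLength (A i j) (A j i))) := by
  funext v
  rcases hpair with ⟨h₁, h₂⟩ | ⟨h₁, h₂⟩ | ⟨h₁, h₂⟩ | ⟨h₁, h₂⟩ | ⟨h₁, h₂⟩ | ⟨h₁, h₂⟩ <;>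
  · norm_num [braidLength, h₁, h₂, alternatingWord, applyWord]
    rw [show v = v + (0 : ℤ) • Pi.single i 1 + (0 : ℤ) • Pi.single j 1 by simp]
    simp only [sR_left_pair (hdiag i), sR_right_pair (hdiag j), h₁, h₂]
    module

theorem exists_nonneg_applyWord_alternatingWord (hdiag : ∀ i, A i i = 2)
    (hpair : IsFiniteTypePair (A i j) (A j i)) {K : ℕ} (hK : K < braidLength (A i j) (A j i)) :
    ∃ a b : ℤ, 0 ≤ a ∧ 0 ≤ b ∧
      applyWord A (alternatingWord i j K) (Pi.single i 1) =
        a • Pi.single i 1 + b • Pi.single j 1 := by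
  suffices ∃ a b : ℤ, 0 ≤ a ∧ 0 ≤ b ∧
      applyWord A (alternatingWord i j K) (0 + (1 : ℤ) • Pi.single i 1 + (0 : ℤ) • Pi.single j 1) =
        0 + a • Pi.single i 1 + b • Pi.single j 1 by simpa using this
  rcases hpair with ⟨h₁, h₂⟩ | ⟨h₁, h₂⟩ | ⟨h₁, h₂⟩ | ⟨h₁, h₂⟩ | ⟨h₁, h₂⟩ | ⟨h₁, h₂⟩ <;>
    norm_num [braidLength, h₁, h₂] at hK <;> interval_cases K <;>
    simp only [alternatingWord, List.concat_eq_append, List.nil_append, List.cons_append,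
      applyWord, Function.comp_apply, id_eq, sR_left_pair (hdiag i), sR_right_pair (hdiag j),
      h₁, h₂, mulVec_zero, Pi.zero_apply] <;>
    exact ⟨_, _, by norm_num, by norm_num, rfl⟩

/-- `(x, y) ↦ ((ab - 1)x - ay, bx - y)` is the action of `sᵢsⱼ` on the coefficients of
`x • αᵢ + y • αⱼ` when `(aᵢⱼ, aⱼᵢ) = (-a, -b)`. -/
lemma rank_two_growth_step {a b x y : ℤ} (ha : 1 ≤ a) (hab : 4 ≤ a * b) (hx : 1 ≤ x)
    (h : a * y ≤ (a * b - 2) * x - 1) :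
    x + 1 ≤ (a * b - 1) * x - a * y ∧ 0 ≤ b * x - y ∧
      a * (b * x - y) ≤ (a * b - 2) * ((a * b - 1) * x - a * y) - 1 := by
  refine ⟨by linarith, by nlinarith, ?_⟩
  nlinarith [mul_le_mul_of_nonneg_left h (show (0 : ℤ) ≤ a * b - 3 by linarith),
    mul_nonneg (show (0 : ℤ) ≤ a * b - 4 by linarith) (show (0 : ℤ) ≤ x by linarith)]

/-- Otherwise the `αᵢ`-coefficients of the roots `(sᵢsⱼ)ᵏ αᵢ` are unbounded. -/
lemma mul_le_three_of_finite (hdiag : ∀ i, A i i = 2) (hoff : ∀ i j, i ≠ j → A i j ≤ 0)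
    (hfin : {v | IsRoot A v}.Finite) (hij : i ≠ j) : A i j * A j i ≤ 3 := by
  by_contra! hgt
  set a := -A i j with ha
  set b := -A j i with hb
  have hab : 4 ≤ a * b := by linarith [show a * b = A i j * A j i by ring]
  have ha₁ : 1 ≤ a := by nlinarith [hoff i j hij, hoff j i hij.symm]
  have growth : ∀ k : ℕ, ∃ x y : ℤ, k + 1 ≤ x ∧ a * y ≤ (a * b - 2) * x - 1 ∧
      IsRoot A (x • Pi.single i 1 + y • Pi.single j 1) := by
    intro k
    induction k with
    | zero => exact ⟨1, 0, by simp, by linarith, ⟨[], i, by simp [applyWord]⟩⟩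
    | succ k ih =>
      obtain ⟨x, y, hx, hxy, hroot⟩ := ih
      obtain ⟨hx', -, hxy'⟩ := rank_two_growth_step ha₁ hab (by omega) hxy
      refine ⟨_, _, by push_cast; omega, hxy', ?_⟩
      convert isRoot_applyWord hroot [i, j] using 1
      show _ = sR A i (sR A j (x • Pi.single i 1 + y • Pi.single j 1))
      rw [← zero_add (x • _), sR_right_pair (hdiag j), sR_left_pair (hdiag i)]
      simp only [mulVec_zero, Pi.zero_apply, zero_add, ha, hb]
      module
  obtain ⟨M, hM⟩ := (hfin.image (fun v => v i)).bddAbove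
  obtain ⟨x, y, hx, -, hroot⟩ := growth M.toNat
  have := hM ⟨_, hroot, rfl⟩
  simp [hij] at this
  omega

lemma IsFiniteCartan.isFiniteTypePair (hA : IsFiniteCartan A) (hij : i ≠ j) :
    IsFiniteTypePair (A i j) (A j i) := by
  have hij₀ := hA.nonpos i j hij
  have hji₀ := hA.nonpos j i hij.symm
  have hprod := mul_le_three_of_finite hA.diag hA.nonpos hA.finite hij
  by_cases hz : A i j = 0
  · exact Or.inl ⟨hz, hA.eq_zero_comm i j hz⟩
  have hz' : A j i ≠ 0 := fun h => hz (hA.eq_zero_comm j i h)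
  generalize A i j = a at *
  generalize A j i = b at *
  have ha : a ≤ -1 := by omega
  have hb : b ≤ -1 := by omega
  have : -3 ≤ a := by nlinarith
  have : -3 ≤ b := by nlinarith
  unfold IsFiniteTypePair
  interval_cases a <;> interval_cases b <;> omega

end RankTwo

section Positivity

variable {A : Matrix (Fin n) (Fin n) ℤ}

theorem eq_alternatingWord_of_isReduced (hdiag : ∀ i, A i i = 2) {d : List (Fin n)} :
    ∀ {i j : Fin n}, IsFiniteTypePair (A i j) (A j i) → (∀ x ∈ d, x = i ∨ x = j) →
      IsReduced A (d ++ [i]) →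
      d = alternatingWord i j d.length ∧ d.length < braidLength (A i j) (A j i) := by
  induction d using List.reverseRecOn with
  | nil =>
    intro i j _ _ _
    exact ⟨rfl, braidLength_pos _ _⟩
  | append_singleton d x ih =>
    intro i j hpair hd hred
    have hx : x = j := by
      refine (hd x (by simp)).resolve_left ?_
      rintro rfl
      exact not_isReduced_append_pair hdiag d x (by simpa using hred)
    subst hx
    obtain ⟨hd_eq, hlt⟩ := ih hpair.symm (fun y hy => (hd y (by simp [hy])).symm)
      hred.of_append.1
    rw [braidLength_comm] at hlt
    have hword : d ++ [x] = alternatingWord i x (d.length + 1) := by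
      rw [alternatingWord_succ, ← hd_eq, List.concat_eq_append]
    refine ⟨by simpa using hword, ?_⟩
    by_contra hge
    have hm : d.length + 1 = braidLength (A i x) (A x i) := by simp at hge; omega
    have hshort : applyWord A (d ++ [x] ++ [i]) = applyWord A (alternatingWord i x d.length) := by
      rw [applyWord_append, hword, hm, applyWord_braid hdiag hpair, ← hm, alternatingWord_succ,
        List.concat_eq_append, ← applyWord_append, List.append_assoc]
      exact applyWord_append_pair hdiag _ i
    have := hred.length_le hshort
    simp at this

theorem exists_nonneg_of_isReduced_append (hA : IsFiniteCartan A) {i j : Fin n} (hij : i ≠ j)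
    {d : List (Fin n)} (hd : ∀ x ∈ d, x = i ∨ x = j) (hred : IsReduced A (d ++ [i])) :
    ∃ a b : ℤ, 0 ≤ a ∧ 0 ≤ b ∧
      applyWord A d (Pi.single i 1) = a • Pi.single i 1 + b • Pi.single j 1 := by
  have hpair := hA.isFiniteTypePair hij
  obtain ⟨hd_eq, hlt⟩ := eq_alternatingWord_of_isReduced hA.diag hpair hd hred
  rw [hd_eq]
  exact exists_nonneg_applyWord_alternatingWord hA.diag hpair hlt

theorem exists_minimal_parabolic_factorization (hdiag : ∀ i, A i i = 2) {l : List (Fin n)}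
    (i j : Fin n) (hl : IsReduced A (l ++ [j])) :
    ∃ u d : List (Fin n), (∀ x ∈ d, x = i ∨ x = j) ∧
      applyWord A (u ++ d) = applyWord A (l ++ [j]) ∧ u.length + d.length = l.length + 1 ∧
      u.length ≤ l.length ∧ IsReduced A (u ++ [i]) ∧ IsReduced A (u ++ [j]) := by
  classical
  have hex : ∃ k, ∃ u d : List (Fin n), (∀ x ∈ d, x = i ∨ x = j) ∧
      applyWord A (u ++ d) = applyWord A (l ++ [j]) ∧ u.length + d.length = l.length + 1 ∧
      u.length = k := ⟨l.length, l, [j], by simp, rfl, by simp, rfl⟩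
  obtain ⟨u, d, hd, hval, hlen, hu⟩ := Nat.find_spec hex
  have hle : Nat.find hex ≤ l.length := Nat.find_min' hex ⟨l, [j], by simp, rfl, by simp, rfl⟩
  have hred : IsReduced A (u ++ d) := hl.of_length_le hval (by simp; omega)
  have hasc : ∀ x, x = i ∨ x = j → IsReduced A (u ++ [x]) := by
    intro x hx
    by_contra hnot
    obtain ⟨r, -, hr, hrlen⟩ := hred.of_append.1.exists_of_not_isReduced_append hdiag hnot
    have hshorter := Nat.find_min' hex ⟨r, x :: d, by simpa [hx] using hd,
      by rw [List.append_cons, applyWord_append, hr, ← applyWord_append, hval], by simp; omega, rfl⟩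
    omega
  exact ⟨u, d, hd, hval, hlen, by omega, hasc i (.inl rfl), hasc j (.inr rfl)⟩

theorem applyWord_single_nonneg_of_isReduced (hA : IsFiniteCartan A) {l : List (Fin n)}
    {i : Fin n} (h : IsReduced A (l ++ [i])) : 0 ≤ applyWord A l (Pi.single i 1) := by
  induction hN : l.length using Nat.strong_induction_on generalizing l i with
  | _ N ih =>
  rcases List.eq_nil_or_concat' l with rfl | ⟨l, j, rfl⟩
  · simp [applyWord, Pi.single_nonneg]
  have hij : i ≠ j := by
    rintro rfl
    exact not_isReduced_append_pair hA.diag l i (by simpa using h)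
  obtain ⟨u, d, hd, hval, hlen, hu, hui, huj⟩ :=
    exists_minimal_parabolic_factorization hA.diag i j h.of_append.1
  have hdi : IsReduced A (d ++ [i]) := by
    refine (IsReduced.of_append (l₁ := u) (h.of_length_le ?_ ?_)).2
    · rw [← List.append_assoc, applyWord_append, hval, ← applyWord_append]
    · simp; omega
  obtain ⟨a, b, ha, hb, hdα⟩ := exists_nonneg_of_isReduced_append hA hij hd hdi
  have hαi := ih u.length (by simp at hN; omega) hui rfl
  have hαj := ih u.length (by simp at hN; omega) huj rfl
  rw [← hval, applyWord_append, Function.comp_apply, hdα, applyWord_add, applyWord_smul,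
    applyWord_smul]
  exact add_nonneg (smul_nonneg ha hαi) (smul_nonneg hb hαj)

end Positivity

section Roots

variable {A : Matrix (Fin n) (Fin n) ℤ}

lemma IsRoot.ne_zero (hdiag : ∀ i, A i i = 2) {v : Fin n → ℤ} (hv : IsRoot A v) : v ≠ 0 := by
  rintro rfl
  obtain ⟨l, k, hl⟩ := hv
  have := congrFun (congrArg (applyWord A l.reverse) hl) k
  rw [applyWord_reverse_apply hdiag, applyWord_eq_mulVec, mulVec_zero] at this
  simp at this

theorem IsRoot.nonneg_or_nonpos (hA : IsFiniteCartan A) {v : Fin n → ℤ} (hv : IsRoot A v) :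
    0 ≤ v ∨ v ≤ 0 := by
  obtain ⟨l, i, rfl⟩ := hv
  obtain ⟨r, hr, hred⟩ := exists_isReduced A l
  rw [← hr]
  by_cases hri : IsReduced A (r ++ [i])
  · exact .inl (applyWord_single_nonneg_of_isReduced hA hri)
  obtain ⟨s, hs, hsr, -⟩ := hred.exists_of_not_isReduced_append hA.diag hri
  rw [← hsr, applyWord_append, Function.comp_apply]
  show _ ∨ applyWord A s (sR A i (Pi.single i 1)) ≤ 0
  rw [sR_single hA.diag, applyWord_neg, neg_nonpos]
  exact .inr (applyWord_single_nonneg_of_isReduced hA hs)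

/-- A root has coprime coordinates, since a simple root lies in its orbit. -/
theorem IsRoot.eq_single_of_not_nonneg_sR (hA : IsFiniteCartan A) {v : Fin n → ℤ} {i : Fin n}
    (hv : IsRoot A v) (hpos : 0 ≤ v) (hneg : ¬ 0 ≤ sR A i v) : v = Pi.single i 1 := by
  have hnp : sR A i v ≤ 0 := ((isRoot_applyWord hv [i]).nonneg_or_nonpos hA).resolve_left hneg
  have hsupp : v = v i • Pi.single i 1 := by
    ext k
    by_cases hk : k = i
    · subst hk; simp
    · have := hnp k
      simp only [sR, hk, if_false, sub_zero, Pi.zero_apply] at this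
      simp [hk, le_antisymm this (hpos k)]
  obtain ⟨l, k, hl⟩ := hv
  have hk := congrFun (congrArg (applyWord A l.reverse) hl) k
  rw [applyWord_reverse_apply hA.diag, hsupp, applyWord_smul] at hk
  have hunit : v i = 1 := Int.eq_one_of_dvd_one (hpos i) ⟨_, by simpa using hk.symm⟩
  rw [hsupp, hunit, one_smul]

theorem ncard_inversions_le (hA : IsFiniteCartan A) (l : List (Fin n)) :
    {v | IsPosRoot A v ∧ ¬ 0 ≤ applyWord A l v}.ncard ≤ l.length := by
  induction l with
  | nil =>
    have : {v | IsPosRoot A v ∧ ¬ 0 ≤ applyWord A [] v} = ∅ :=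
      Set.eq_empty_of_forall_notMem fun v hv => hv.2 hv.1.2
    simp [this]
  | cons i l ih =>
    have hsub : {v | IsPosRoot A v ∧ ¬ 0 ≤ applyWord A (i :: l) v} ⊆
        insert (applyWord A l.reverse (Pi.single i 1))
          {v | IsPosRoot A v ∧ ¬ 0 ≤ applyWord A l v} := by
      rintro v ⟨hv, hneg⟩
      by_cases hlv : 0 ≤ applyWord A l v
      · left
        rw [← (isRoot_applyWord hv.1 l).eq_single_of_not_nonneg_sR hA hlv hneg,
          applyWord_reverse_apply hA.diag]
      · exact .inr ⟨hv, hlv⟩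
    have hfin : (insert (applyWord A l.reverse (Pi.single i 1))
        {v | IsPosRoot A v ∧ ¬ 0 ≤ applyWord A l v}).Finite :=
      (hA.finite.subset fun v hv => hv.1.1).insert _
    calc _ ≤ _ := Set.ncard_le_ncard hsub hfin
      _ ≤ _ := Set.ncard_insert_le _ _
      _ ≤ (i :: l).length := by simpa using ih

theorem isReduced_of_forall_isPosRoot_neg (hA : IsFiniteCartan A) {ω : List (Fin n)}
    (hlen : ω.length = {v | IsPosRoot A v}.ncard)
    (hw0 : ∀ v, IsPosRoot A v → IsPosRoot A (-(applyWord A ω v))) : IsReduced A ω := by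
  obtain ⟨r, hr, hred⟩ := exists_isReduced A ω
  have hall : {v | IsPosRoot A v ∧ ¬ 0 ≤ applyWord A r v} = {v | IsPosRoot A v} := by
    ext v
    refine ⟨And.left, fun hv => ⟨hv, fun hnn => ?_⟩⟩
    have hw := hw0 v hv
    rw [hr] at hnn
    exact hw.1.ne_zero hA.diag (le_antisymm (neg_nonpos.mpr hnn) hw.2)
  have := ncard_inversions_le hA r
  rw [hall, ← hlen] at this
  exact hred.of_length_le hr.symm this

end Roots

/-- `wordRoot A ω k` is `β_{k+1} = s_{i₁} ⋯ s_{i_k}(α_{i_{k+1}})`: indices start at `0`. -/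
def wordRoot (A : Matrix (Fin n) (Fin n) ℤ) (ω : List (Fin n)) (k : Fin ω.length) : Fin n → ℤ :=
  applyWord A (ω.take k) (Pi.single (ω.get k) 1)

lemma wordRoot_ne_zero {A : Matrix (Fin n) (Fin n) ℤ} (hdiag : ∀ i, A i i = 2)
    (ω : List (Fin n)) (k : Fin ω.length) : wordRoot A ω k ≠ 0 :=
  IsRoot.ne_zero hdiag ⟨_, _, rfl⟩

section ConvexOrder

variable {A : Matrix (Fin n) (Fin n) ℤ} (hA : IsFiniteCartan A) {ω : List (Fin n)}
  (hω : IsReduced A ω)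
include hA hω

lemma reverse_take_apply_wordRoot_nonneg {p : ℕ} (k : Fin ω.length) (hp : p ≤ k) :
    0 ≤ applyWord A (ω.take p).reverse (wordRoot A ω k) := by
  obtain ⟨M, hM⟩ := List.take_prefix_take_left (l := ω) hp
  have hred : IsReduced A (ω.take p ++ (M ++ [ω.get k])) := by
    rw [← List.append_assoc, hM, List.get_eq_getElem, List.take_concat_get']
    exact hω.take _
  rw [wordRoot, ← hM, applyWord_append, Function.comp_apply, applyWord_reverse_apply hA.diag]
  exact applyWord_single_nonneg_of_isReduced hA hred.of_append.2

lemma reverse_take_apply_wordRoot_nonpos {p : ℕ} (k : Fin ω.length) (hp : k < p) :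
    applyWord A (ω.take p).reverse (wordRoot A ω k) ≤ 0 := by
  obtain ⟨M, hM⟩ := List.take_prefix_take_left (l := ω) (show k + 1 ≤ p by omega)
  rw [← List.take_concat_get' ω k k.2] at hM
  have hred : IsReduced A (ω.take k ++ ([ω[(k : ℕ)]] ++ M)) := by
    rw [← List.append_assoc, hM]
    exact hω.take p
  have hrev : IsReduced A (M.reverse ++ [ω[(k : ℕ)]]) := by
    simpa using hred.of_append.2.reverse hA.diag
  rw [wordRoot, ← hM, List.reverse_append, List.reverse_append, applyWord_append,
    applyWord_append, Function.comp_apply, Function.comp_apply,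
    applyWord_reverse_apply hA.diag, List.get_eq_getElem]
  show applyWord A M.reverse (sR A ω[(k : ℕ)] (Pi.single ω[(k : ℕ)] 1)) ≤ 0
  rw [sR_single hA.diag, applyWord_neg, neg_nonpos]
  exact applyWord_single_nonneg_of_isReduced hA hrev

lemma not_lt_lt_of_wordRoot_eq_add {k₁ k₂ k₃ : Fin ω.length}
    (hsum : wordRoot A ω k₂ = wordRoot A ω k₁ + wordRoot A ω k₃) :
    ¬ (k₂ < k₁ ∧ k₂ < k₃) := by
  rintro ⟨h₁, h₃⟩
  have h := congrFun (congrArg (applyWord A (ω.take (k₂ + 1)).reverse) hsum) (ω.get k₂)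
  have hlhs : applyWord A (ω.take (k₂ + 1)).reverse (wordRoot A ω k₂) =
      -Pi.single (ω.get k₂) 1 := by
    rw [wordRoot, List.get_eq_getElem, ← List.take_concat_get' ω k₂ k₂.2, List.reverse_append,
      applyWord_append, Function.comp_apply, applyWord_reverse_apply hA.diag]
    exact sR_single hA.diag _
  have hpos₁ := reverse_take_apply_wordRoot_nonneg hA hω k₁ (show (k₂ : ℕ) + 1 ≤ k₁ by omega)
    (ω.get k₂)
  have hpos₃ := reverse_take_apply_wordRoot_nonneg hA hω k₃ (show (k₂ : ℕ) + 1 ≤ k₃ by omega)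
    (ω.get k₂)
  rw [applyWord_add, hlhs] at h
  simp only [Pi.neg_apply, Pi.add_apply, Pi.single_eq_same, Pi.zero_apply] at h hpos₁ hpos₃
  linarith

lemma not_gt_gt_of_wordRoot_eq_add {k₁ k₂ k₃ : Fin ω.length}
    (hsum : wordRoot A ω k₂ = wordRoot A ω k₁ + wordRoot A ω k₃) :
    ¬ (k₁ < k₂ ∧ k₃ < k₂) := by
  rintro ⟨h₁, h₃⟩
  have h := congrFun (congrArg (applyWord A (ω.take k₂).reverse) hsum) (ω.get k₂)
  have hneg₁ := reverse_take_apply_wordRoot_nonpos hA hω k₁ h₁ (ω.get k₂)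
  have hneg₃ := reverse_take_apply_wordRoot_nonpos hA hω k₃ h₃ (ω.get k₂)
  rw [applyWord_add, wordRoot, applyWord_reverse_apply hA.diag] at h
  simp only [Pi.add_apply, Pi.single_eq_same, Pi.zero_apply] at h hneg₁ hneg₃
  linarith

end ConvexOrder

theorem stmt11 {n : ℕ} (A : Matrix (Fin n) (Fin n) ℤ)
    (hdiag : ∀ i, A i i = 2) (hoff : ∀ i j, i ≠ j → A i j ≤ 0)
    (hzero : ∀ i j, A i j = 0 → A j i = 0)
    (hfin : {v | IsRoot A v}.Finite)
    (ω : List (Fin n))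
    (hlen : ω.length = {v | IsPosRoot A v}.ncard)
    (hw0 : ∀ v, IsPosRoot A v → IsPosRoot A (-(applyWord A ω v))) :
    ∀ k₁ k₂ k₃ : Fin ω.length,
      applyWord A (ω.take k₂) (Pi.single (ω.get k₂) 1) =
        applyWord A (ω.take k₁) (Pi.single (ω.get k₁) 1) +
          applyWord A (ω.take k₃) (Pi.single (ω.get k₃) 1) →
      (k₁ < k₂ ∧ k₂ < k₃) ∨ (k₃ < k₂ ∧ k₂ < k₁) := by
  intro k₁ k₂ k₃ hsum
  have hA : IsFiniteCartan A := ⟨hdiag, hoff, hzero, hfin⟩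
  have hω := isReduced_of_forall_isPosRoot_neg hA hlen hw0
  change wordRoot A ω k₂ = wordRoot A ω k₁ + wordRoot A ω k₃ at hsum
  have h₁₂ : k₁ ≠ k₂ := by
    rintro rfl
    exact wordRoot_ne_zero hdiag ω k₃ (by simpa using hsum)
  have h₃₂ : k₃ ≠ k₂ := by
    rintro rfl
    exact wordRoot_ne_zero hdiag ω k₁ (by simpa using hsum)
  have hlow := not_lt_lt_of_wordRoot_eq_add hA hω hsum
  have hhigh := not_gt_gt_of_wordRoot_eq_add hA hω hsum
  omega

end Stmt11
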